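/- arXiv:1601.01836 — 2 statements merged into one kernel-verified Lean document; each statement's English description precedes it below -/
import Mathlib

section
/- If ℓ_J is a commutator-contractive invariant length function on a group J and X is a finite group, then the length function ℓ_J^X on the wreath product J ≀ X (defined by ℓ_J^X(b) = max_{x∈X} ℓ_J(b(x)) on the base group and ℓ_J^X(xb) = 1 for x ≠ 1) is commutator-contractive. -/
/-- An invariant length function on a group, valued in `[0,1]`. -/
def IsInvLength {K : Type*} [Group K] (ℓ : K → ℝ) : Prop :=
  (∀ x, 0 ≤ ℓ x) ∧ (∀ x, ℓ x ≤ 1) ∧ (∀ x, ℓ x = 0 ↔ x = 1) ∧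
  (∀ x, ℓ x⁻¹ = ℓ x) ∧ (∀ x y, ℓ (x * y) ≤ ℓ x + ℓ y) ∧
  (∀ x y, ℓ (x * y * x⁻¹) = ℓ y)

/-- A length function is commutator-contractive if `ℓ([x,y]) ≤ 4 ℓ(x) ℓ(y)`. -/
def IsCommContractive {K : Type*} [Group K] (ℓ : K → ℝ) : Prop :=
  ∀ x y : K, ℓ (x⁻¹ * y⁻¹ * x * y) ≤ 4 * ℓ x * ℓ y

/-- The action of `X` on the base group `X → J` of the wreath product `J ≀ X`. -/
def wrAct (J X : Type*) [Group J] [Group X] : X →* MulAut (X → J) where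
  toFun x :=
    { toFun := fun b y => b (y * x)
      invFun := fun b y => b (y * x⁻¹)
      left_inv := fun b => by funext y; simp [mul_assoc]
      right_inv := fun b => by funext y; simp [mul_assoc]
      map_mul' := fun b c => rfl }
  map_one' := by ext b y; simp
  map_mul' := fun x₁ x₂ => by ext b y; simp [mul_assoc]

/-- The restricted standard wreath product `J ≀ X` for finite `X`. -/
abbrev Wr (J X : Type*) [Group J] [Group X] := (X → J) ⋊[wrAct J X] X

/-- The length function `ℓ_J^X` on `J ≀ X`. -/
noncomputable def wrLen {J X : Type*} [Group J] [Group X] [Fintype X] [DecidableEq X]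
    (ℓJ : J → ℝ) (w : Wr J X) : ℝ :=
  if w.right = 1 then
    Finset.univ.sup' ⟨1, Finset.mem_univ 1⟩ (fun x => ℓJ (w.left x))
  else 1

/-! On the base group `X → J` the length is the maximum of the coordinate lengths, so
commutator-contractivity passes to it coordinatewise. Every other element has length `1`, and for
any invariant length `ℓ` the commutator `[x,y] = x⁻¹ · y⁻¹xy = x⁻¹y⁻¹x · y` has length at most
`2 min (ℓ x) (ℓ y)`, which is at most `4 ℓ x ℓ y` as soon as `ℓ x = 1` or `ℓ y = 1`. -/

open Finset SemidirectProduct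

section InvLength

variable {K : Type*} [Group K] {ℓ : K → ℝ}

lemma IsInvLength.commutator_le_two_mul_left (hℓ : IsInvLength ℓ) (x y : K) :
    ℓ (x⁻¹ * y⁻¹ * x * y) ≤ 2 * ℓ x := by
  obtain ⟨-, -, -, hinv, hsub, hconj⟩ := hℓ
  calc ℓ (x⁻¹ * y⁻¹ * x * y) = ℓ (x⁻¹ * (y⁻¹ * x * y⁻¹⁻¹)) := congrArg ℓ (by group)
    _ ≤ ℓ x⁻¹ + ℓ (y⁻¹ * x * y⁻¹⁻¹) := hsub _ _
    _ = 2 * ℓ x := by rw [hinv, hconj]; ring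

lemma IsInvLength.commutator_le_two_mul_right (hℓ : IsInvLength ℓ) (x y : K) :
    ℓ (x⁻¹ * y⁻¹ * x * y) ≤ 2 * ℓ y := by
  obtain ⟨-, -, -, hinv, hsub, hconj⟩ := hℓ
  calc ℓ (x⁻¹ * y⁻¹ * x * y) = ℓ (x⁻¹ * y⁻¹ * x⁻¹⁻¹ * y) := by rw [inv_inv]
    _ ≤ ℓ (x⁻¹ * y⁻¹ * x⁻¹⁻¹) + ℓ y := hsub _ _
    _ = 2 * ℓ y := by rw [hconj, hinv]; ring

lemma IsInvLength.commutator_le_of_eq_one (hℓ : IsInvLength ℓ) {x y : K}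
    (h : ℓ x = 1 ∨ ℓ y = 1) : ℓ (x⁻¹ * y⁻¹ * x * y) ≤ 4 * ℓ x * ℓ y := by
  rcases h with hx | hy
  · have := hℓ.commutator_le_two_mul_right x y
    have := hℓ.1 y
    rw [hx]
    linarith
  · have := hℓ.commutator_le_two_mul_left x y
    have := hℓ.1 x
    rw [hy]
    linarith

end InvLength

section SupLen

variable {J X : Type*} [Fintype X] [Nonempty X] {ℓJ : J → ℝ}

noncomputable def supLen (ℓJ : J → ℝ) (b : X → J) : ℝ :=
  univ.sup' univ_nonempty fun x => ℓJ (b x)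

lemma le_supLen (ℓJ : J → ℝ) (b : X → J) (x : X) : ℓJ (b x) ≤ supLen ℓJ b :=
  le_sup' (fun x => ℓJ (b x)) (mem_univ x)

lemma supLen_le_iff {b : X → J} {c : ℝ} : supLen ℓJ b ≤ c ↔ ∀ x, ℓJ (b x) ≤ c := by
  simp [supLen]

lemma supLen_comp_equiv (b : X → J) (e : X ≃ X) : supLen ℓJ (b ∘ e) = supLen ℓJ b := by
  simp only [supLen, sup'_univ_eq_ciSup, Function.comp_apply]
  exact e.iSup_comp (g := fun x => ℓJ (b x))

variable [Group J]

lemma isInvLength_supLen (hJ : IsInvLength ℓJ) : IsInvLength (supLen (X := X) ℓJ) := by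
  obtain ⟨h0, h1, hzero, hinv, hsub, hconj⟩ := hJ
  have hnonneg (b : X → J) : 0 ≤ supLen ℓJ b :=
    (h0 _).trans (le_supLen ℓJ b (Classical.arbitrary X))
  refine ⟨hnonneg, fun b => supLen_le_iff.2 fun x => h1 _, fun b => ?_, fun b => ?_,
    fun a b => ?_, fun a b => ?_⟩
  · refine ⟨fun hb => funext fun x => (hzero _).1 ?_, fun hb => ?_⟩
    · exact le_antisymm (hb ▸ le_supLen ℓJ b x) (h0 _)
    · exact le_antisymm (supLen_le_iff.2 fun x => by simp [hb, (hzero 1).2]) (hnonneg b)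
  · simp only [supLen, Pi.inv_apply, hinv]
  · exact supLen_le_iff.2 fun x =>
      (hsub _ _).trans (add_le_add (le_supLen ℓJ a x) (le_supLen ℓJ b x))
  · simp only [supLen, Pi.mul_apply, Pi.inv_apply, hconj]

lemma isCommContractive_supLen (h0 : ∀ x, 0 ≤ ℓJ x) (hJc : IsCommContractive ℓJ) :
    IsCommContractive (supLen (X := X) ℓJ) := fun a b =>
  supLen_le_iff.2 fun x => calc
    ℓJ ((a⁻¹ * b⁻¹ * a * b) x) ≤ 4 * ℓJ (a x) * ℓJ (b x) := hJc _ _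
    _ ≤ 4 * supLen ℓJ a * supLen ℓJ b := by
      have ha := le_supLen ℓJ a x
      have hb := le_supLen ℓJ b x
      exact mul_le_mul (by linarith) hb (h0 _) (by linarith [h0 (a x)])

end SupLen

section Wreath

variable {J X : Type*} [Group J] [Group X]

lemma Wr.eq_inl_or_right_ne_one (w : Wr J X) : (∃ b, w = inl b) ∨ w.right ≠ 1 := by
  refine or_iff_not_imp_right.2 fun h => ⟨w.left, ?_⟩
  ext <;> simp_all

lemma Wr.inl_conj (g : Wr J X) (b : X → J) :
    g * inl b * g⁻¹ = inl (g.left * wrAct J X g.right b * g.left⁻¹) := by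
  ext x
  · simp [mul_left, inv_left, mul_assoc]
  · simp

variable [Fintype X] [DecidableEq X] {ℓJ : J → ℝ}

lemma wrLen_inl (b : X → J) : wrLen ℓJ (inl b : Wr J X) = supLen ℓJ b :=
  if_pos rfl

lemma wrLen_of_right_ne_one {w : Wr J X} (h : w.right ≠ 1) : wrLen ℓJ w = 1 :=
  if_neg h

lemma isInvLength_wrLen (hJ : IsInvLength ℓJ) : IsInvLength (wrLen (X := X) ℓJ) := by
  obtain ⟨hS0, hS1, hSzero, hSinv, hSsub, hSconj⟩ := isInvLength_supLen (X := X) hJ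
  have h0 (w : Wr J X) : 0 ≤ wrLen ℓJ w := by
    rcases w.eq_inl_or_right_ne_one with ⟨b, rfl⟩ | h
    · exact wrLen_inl b ▸ hS0 b
    · exact wrLen_of_right_ne_one h ▸ zero_le_one
  have h1 (w : Wr J X) : wrLen ℓJ w ≤ 1 := by
    rcases w.eq_inl_or_right_ne_one with ⟨b, rfl⟩ | h
    · exact wrLen_inl b ▸ hS1 b
    · exact (wrLen_of_right_ne_one h).le
  refine ⟨h0, h1, fun w => ?_, fun w => ?_, fun u v => ?_, fun g w => ?_⟩
  · rcases w.eq_inl_or_right_ne_one with ⟨b, rfl⟩ | h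
    · rw [wrLen_inl, hSzero, map_eq_one_iff _ inl_injective]
    · simp only [wrLen_of_right_ne_one h, one_ne_zero, false_iff]
      rintro rfl
      exact h rfl
  · rcases w.eq_inl_or_right_ne_one with ⟨b, rfl⟩ | h
    · rw [← map_inv, wrLen_inl, wrLen_inl, hSinv]
    · rw [wrLen_of_right_ne_one h, wrLen_of_right_ne_one (inv_ne_one.2 h)]
  · rcases u.eq_inl_or_right_ne_one with ⟨a, rfl⟩ | hu
    · rcases v.eq_inl_or_right_ne_one with ⟨b, rfl⟩ | hv
      · rw [← map_mul, wrLen_inl, wrLen_inl, wrLen_inl]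
        exact hSsub a b
      · linarith [wrLen_of_right_ne_one (ℓJ := ℓJ) hv, h1 (inl a * v), h0 (inl a)]
    · linarith [wrLen_of_right_ne_one (ℓJ := ℓJ) hu, h1 (u * v), h0 v]
  · rcases w.eq_inl_or_right_ne_one with ⟨b, rfl⟩ | h
    · rw [Wr.inl_conj, wrLen_inl, wrLen_inl, hSconj]
      exact supLen_comp_equiv b (Equiv.mulRight g.right)
    · have hconj : (g * w * g⁻¹).right ≠ 1 := by simpa [mul_right, inv_right] using h
      rw [wrLen_of_right_ne_one h, wrLen_of_right_ne_one hconj]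

end Wreath

theorem stmt_7 {J X : Type*} [Group J] [Group X] [Fintype X] [DecidableEq X]
    (ℓJ : J → ℝ) (hJ : IsInvLength ℓJ) (hJc : IsCommContractive ℓJ) :
    IsCommContractive (wrLen (X := X) ℓJ) := by
  intro u v
  rcases u.eq_inl_or_right_ne_one with ⟨a, rfl⟩ | hu
  · rcases v.eq_inl_or_right_ne_one with ⟨b, rfl⟩ | hv
    · simpa only [← map_inv, ← map_mul, wrLen_inl] using isCommContractive_supLen hJ.1 hJc a b
    · exact (isInvLength_wrLen hJ).commutator_le_of_eq_one (Or.inr (wrLen_of_right_ne_one hv))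
  · exact (isInvLength_wrLen hJ).commutator_le_of_eq_one (Or.inl (wrLen_of_right_ne_one hu))
end

section
/- A hyperlinear group with the strong discrete approximation property has order at most 2. That is, if G is a group such that for every finite F ⊆ G and ε > 0 there exists n and a map φ : G → U(n) with φ(1) = 1, ℓ(φ(gh)φ(h)⁻¹φ(g)⁻¹) ≤ ε for g,h ∈ F, and ℓ(φ(g)) ≥ 1 − ε for all g ∈ F \ {1} (where ℓ(u) = (1/2)‖u − I‖_{HS}), then |G| ≤ 2. -/
open Matrix

/-- The normalized Hilbert–Schmidt norm of an `n × n` complex matrix. -/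
noncomputable def hsNorm (n : ℕ) (A : Matrix (Fin n) (Fin n) ℂ) : ℝ :=
  Real.sqrt ((Aᴴ * A).trace.re / n)

/-- The length function `ℓ(g) = (1/2) ‖g - I‖_HS` on the unitary group. -/
noncomputable def hsLen (n : ℕ) (g : Matrix (Fin n) (Fin n) ℂ) : ℝ :=
  (1 / 2) * hsNorm n (g - 1)

/-! If `|G| > 2` there are `g, h` with `g`, `h`, `gh` all nontrivial. By the parallelogram law
`‖u - I‖² + ‖u + I‖² = 4`, a unitary with `ℓ(u)` close to `1` is close to `-I`. So `φ(g)`, `φ(h)`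
and `φ(gh)` are all close to `-I`, while approximate multiplicativity puts `φ(gh)` close to
`φ(g)φ(h) ≈ (-I)² = I`; this contradicts `‖I - (-I)‖ = 2`. -/

variable {n : ℕ}

section Frobenius

attribute [local instance] Matrix.frobeniusNormedAddCommGroup Matrix.frobeniusNormedSpace

theorem Matrix.re_trace_conjTranspose_mul_self {m k : Type*} [Fintype m] [Fintype k]
    (A : Matrix m k ℂ) : (Aᴴ * A).trace.re = ‖A‖ ^ 2 := by
  rw [frobenius_norm_def, ← Real.rpow_natCast, ← Real.rpow_mul (by positivity)]
  norm_num [trace, mul_apply, Complex.re_sum, Complex.mul_re, Complex.sq_norm,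
    Complex.normSq_apply]
  exact Finset.sum_comm

theorem hsNorm_eq_frobenius_norm (A : Matrix (Fin n) (Fin n) ℂ) :
    hsNorm n A = ‖A‖ / Real.sqrt n := by
  rw [hsNorm, re_trace_conjTranspose_mul_self, Real.sqrt_div (sq_nonneg _),
    Real.sqrt_sq (norm_nonneg _)]

theorem hsNorm_sq (A : Matrix (Fin n) (Fin n) ℂ) : hsNorm n A ^ 2 = (Aᴴ * A).trace.re / n :=
  Real.sq_sqrt (by rw [re_trace_conjTranspose_mul_self]; positivity)

theorem hsNorm_sub_le (A B : Matrix (Fin n) (Fin n) ℂ) :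
    hsNorm n (A - B) ≤ hsNorm n A + hsNorm n B := by
  simp only [hsNorm_eq_frobenius_norm, ← add_div]
  gcongr
  exact norm_sub_le A B

theorem hsNorm_smul (c : ℂ) (A : Matrix (Fin n) (Fin n) ℂ) :
    hsNorm n (c • A) = ‖c‖ * hsNorm n A := by
  simp only [hsNorm_eq_frobenius_norm, norm_smul, mul_div_assoc]

end Frobenius

theorem hsNorm_mul_unitary (A : Matrix (Fin n) (Fin n) ℂ) {u : Matrix (Fin n) (Fin n) ℂ}
    (hu : uᴴ * u = 1) : hsNorm n (A * u) = hsNorm n A := by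
  have hu' : u * uᴴ = 1 := mul_eq_one_comm.mp hu
  rw [hsNorm, hsNorm, conjTranspose_mul, mul_assoc, ← mul_assoc Aᴴ, trace_mul_comm,
    mul_assoc, hu', mul_one]

theorem hsNorm_one (hn : 0 < n) : hsNorm n 1 = 1 := by
  have : (n : ℝ) ≠ 0 := by positivity
  simp [hsNorm, this]

theorem hsNorm_sub_one_sq_add_hsNorm_add_one_sq (hn : 0 < n)
    {u : Matrix (Fin n) (Fin n) ℂ} (hu : uᴴ * u = 1) :
    hsNorm n (u - 1) ^ 2 + hsNorm n (u + 1) ^ 2 = 4 := by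
  have hsum : (u - 1)ᴴ * (u - 1) + (u + 1)ᴴ * (u + 1) = (4 : ℂ) • 1 := by
    simp only [conjTranspose_sub, conjTranspose_add, conjTranspose_one, sub_mul, mul_sub,
      add_mul, mul_add, mul_one, one_mul, hu]
    module
  have : (n : ℝ) ≠ 0 := by positivity
  rw [hsNorm_sq, hsNorm_sq, ← add_div, ← Complex.add_re, ← trace_add, hsum]
  simp [this]

theorem hsNorm_add_one_sq_le_of_one_sub_le_hsLen (hn : 0 < n)
    {u : Matrix (Fin n) (Fin n) ℂ} (hu : uᴴ * u = 1) {ε : ℝ} (hε : 1 - ε ≤ hsLen n u) :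
    hsNorm n (u + 1) ^ 2 ≤ 8 * ε := by
  have hpar := hsNorm_sub_one_sq_add_hsNorm_add_one_sq hn hu
  have hlen : 0 ≤ hsNorm n (u - 1) := Real.sqrt_nonneg _
  rw [hsLen] at hε
  nlinarith [sq_nonneg (hsNorm n (u + 1))]

theorem two_le_hsNorm_add_one_add_hsNorm_defect (hn : 0 < n) {u v : Matrix (Fin n) (Fin n) ℂ}
    (hu : uᴴ * u = 1) (hv : vᴴ * v = 1) (w : Matrix (Fin n) (Fin n) ℂ) :
    2 ≤ hsNorm n (u + 1) + hsNorm n (v + 1) + hsNorm n (w + 1) +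
      hsNorm n (w * vᴴ * uᴴ - 1) := by
  have hdecomp : (2 : ℂ) • (1 : Matrix (Fin n) (Fin n) ℂ) =
      (w + 1) - (w * vᴴ * uᴴ - 1) * (u * v) - ((u + 1) * v - (v + 1)) := by
    have : w * vᴴ * uᴴ * (u * v) = w := by
      rw [mul_assoc (w * vᴴ), ← mul_assoc uᴴ, hu, one_mul, mul_assoc, hv, mul_one]
    rw [sub_mul, this, add_mul, one_mul, one_mul]
    module
  have huv : (u * v)ᴴ * (u * v) = 1 := by
    rw [conjTranspose_mul, mul_assoc, ← mul_assoc uᴴ, hu, one_mul, hv]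
  have h2 : hsNorm n ((2 : ℂ) • 1) = 2 := by simp [hsNorm_smul, hsNorm_one hn]
  calc 2 = hsNorm n ((w + 1) - (w * vᴴ * uᴴ - 1) * (u * v) - ((u + 1) * v - (v + 1))) := by
        rw [← hdecomp, h2]
    _ ≤ hsNorm n (w + 1) + hsNorm n (w * vᴴ * uᴴ - 1) +
          (hsNorm n (u + 1) + hsNorm n (v + 1)) := by
        grw [hsNorm_sub_le, hsNorm_sub_le, hsNorm_sub_le ((u + 1) * v), hsNorm_mul_unitary _ huv,
          hsNorm_mul_unitary _ hv]
    _ = _ := by ring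

theorem Group.exists_ne_one_mul_ne_one {G : Type*} [Group G] (hG : 2 < Nat.card G) :
    ∃ g h : G, g ≠ 1 ∧ h ≠ 1 ∧ g * h ≠ 1 := by
  by_contra! hmul
  obtain ⟨a, b, hab⟩ : ∃ a b : G, ∀ x, x = a ∨ x = b := by
    by_cases htriv : ∃ g : G, g ≠ 1
    · obtain ⟨g, hg⟩ := htriv
      exact ⟨1, g⁻¹, fun x => or_iff_not_imp_left.mpr fun hx =>
        eq_inv_of_mul_eq_one_right (hmul g x hg hx)⟩
    · exact ⟨1, 1, fun x => .inl (not_exists_not.mp htriv x)⟩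
  have hsurj : Function.Surjective fun t : Bool => if t then a else b := fun x => by
    rcases hab x with rfl | rfl
    exacts [⟨true, rfl⟩, ⟨false, rfl⟩]
  have := Nat.card_le_card_of_surjective _ hsurj
  rw [Nat.card_eq_fintype_card (α := Bool), Fintype.card_bool] at this
  omega

theorem stmt_12 {G : Type*} [Group G]
    (happrox : ∀ F : Finset G, ∀ ε : ℝ, 0 < ε →
      ∃ n : ℕ, 0 < n ∧ ∃ φ : G → Matrix (Fin n) (Fin n) ℂ,
        (∀ g : G, (φ g)ᴴ * φ g = 1) ∧
        φ 1 = 1 ∧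
        (∀ g ∈ F, ∀ h ∈ F, hsLen n (φ (g * h) * (φ h)⁻¹ * (φ g)⁻¹) ≤ ε) ∧
        (∀ g ∈ F, g ≠ 1 → 1 - ε ≤ hsLen n (φ g))) :
    Nat.card G ≤ 2 := by
  classical
  by_contra! hG
  obtain ⟨g, h, hg, hh, hgh⟩ := Group.exists_ne_one_mul_ne_one hG
  -- `8 ε = (2 / 5) ^ 2` and `3 * (2 / 5) + 2 ε < 2`
  obtain ⟨n, hn, φ, hunit, -, hmul, hfar⟩ := happrox {g, h, g * h} (1 / 50) (by norm_num)
  have hnear : ∀ x ∈ ({g, h, g * h} : Finset G), x ≠ 1 → hsNorm n (φ x + 1) ≤ 2 / 5 :=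
    fun x hx hx1 => (pow_le_pow_iff_left₀ (Real.sqrt_nonneg _) (by norm_num) two_ne_zero).mp <|
      (hsNorm_add_one_sq_le_of_one_sub_le_hsLen hn (hunit x) (hfar x hx hx1)).trans (by norm_num)
  have hdefect : hsLen n (φ (g * h) * (φ h)ᴴ * (φ g)ᴴ) ≤ 1 / 50 := by
    simpa only [inv_eq_left_inv (hunit _)] using hmul g (by simp) h (by simp)
  have htwo := two_le_hsNorm_add_one_add_hsNorm_defect hn (hunit g) (hunit h) (φ (g * h))
  have hnear_g := hnear g (by simp) hg
  have hnear_h := hnear h (by simp) hh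
  have hnear_gh := hnear (g * h) (by simp) hgh
  rw [hsLen] at hdefect
  linarith
end
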